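/- Let M₀ = [[1/10, 0], [0, 1/5]] and N₀ = [[3/10, 1/√10], [1/√10, 7/10]] as 2×2 real matrices, and let Φ_M, Φ_N be the measurement channels of the two-outcome POVMs {M₀, 1₂ − M₀} and {N₀, 1₂ − N₀}. Then M₀·N₀ ≠ N₀·M₀ (the POVMs do not commute), det(M₀ − N₀) = 0, and (Φ_M, Φ_N) is a Maximal Entanglement Worst Case pair: ‖Φ_M − Φ_N‖_⋄ = 2·‖Φ_M − Φ_N‖_ME. -/

import Mathlib

open Matrix Kronecker ComplexOrder

noncomputable section

/-- The matrix absolute value `|A| = √(AᴴA)`. -/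
noncomputable def matAbs {n : Type*} [Fintype n] [DecidableEq n] (A : Matrix n n ℂ) :
    Matrix n n ℂ :=
  (Matrix.posSemidef_conjTranspose_mul_self A).1.eigenvectorUnitary.1 *
    Matrix.diagonal ((↑) ∘ Real.sqrt ∘ (Matrix.posSemidef_conjTranspose_mul_self A).1.eigenvalues) *
    (star (Matrix.posSemidef_conjTranspose_mul_self A).1.eigenvectorUnitary : Matrix n n ℂ)

/-- The trace norm `‖A‖₁ = Tr √(AᴴA)`. -/
noncomputable def traceNorm {n : Type*} [Fintype n] [DecidableEq n] (A : Matrix n n ℂ) : ℝ :=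
  ((matAbs A).trace).re

/-- The positive semidefinite square root of a PSD matrix (zero otherwise). -/
noncomputable def matSqrt {n : Type*} [Fintype n] [DecidableEq n] (σ : Matrix n n ℂ) :
    Matrix n n ℂ :=
  open scoped Classical in
  if h : σ.PosSemidef then
    h.1.eigenvectorUnitary.1 * Matrix.diagonal ((↑) ∘ Real.sqrt ∘ h.1.eigenvalues) *
      (star h.1.eigenvectorUnitary : Matrix n n ℂ) else 0

/-- A density matrix: positive semidefinite with unit trace. -/
def IsDensity {n : Type*} [Fintype n] [DecidableEq n] (σ : Matrix n n ℂ) : Prop :=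
  σ.PosSemidef ∧ σ.trace = 1

/-- The Choi operator of a linear map between matrix algebras. -/
noncomputable def choi {d m : ℕ}
    (S : Matrix (Fin d) (Fin d) ℂ →ₗ[ℂ] Matrix (Fin m) (Fin m) ℂ) :
    Matrix (Fin m × Fin d) (Fin m × Fin d) ℂ :=
  ∑ i : Fin d, ∑ j : Fin d,
    (S (Matrix.single i j 1)) ⊗ₖ (Matrix.single i j 1)

/-- The ME-norm `‖S‖_ME = ‖J(S)‖₁ / d`. -/
noncomputable def MENorm {d m : ℕ}
    (S : Matrix (Fin d) (Fin d) ℂ →ₗ[ℂ] Matrix (Fin m) (Fin m) ℂ) : ℝ :=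
  traceNorm (choi S) / d

/-- The diamond norm: supremum over density matrices σ of
`‖(1 ⊗ √σ) J(S) (1 ⊗ √σ)‖₁`. -/
noncomputable def diamondNorm {d m : ℕ}
    (S : Matrix (Fin d) (Fin d) ℂ →ₗ[ℂ] Matrix (Fin m) (Fin m) ℂ) : ℝ :=
  ⨆ σ : {σ : Matrix (Fin d) (Fin d) ℂ // IsDensity σ},
    traceNorm (((1 : Matrix (Fin m) (Fin m) ℂ) ⊗ₖ matSqrt σ.1) * choi S *
      ((1 : Matrix (Fin m) (Fin m) ℂ) ⊗ₖ matSqrt σ.1))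

/-- The M-operator `M(S) = Tr_B |J(S)|`. -/
noncomputable def Mop {d m : ℕ}
    (S : Matrix (Fin d) (Fin d) ℂ →ₗ[ℂ] Matrix (Fin m) (Fin m) ℂ) :
    Matrix (Fin d) (Fin d) ℂ :=
  Matrix.of fun k l => ∑ b : Fin m, matAbs (choi S) (b, k) (b, l)

/-- A quantum channel: completely positive (PSD Choi operator, by Choi's theorem)
and trace preserving. -/
def IsQChannel {d m : ℕ}
    (S : Matrix (Fin d) (Fin d) ℂ →ₗ[ℂ] Matrix (Fin m) (Fin m) ℂ) : Prop :=
  (choi S).PosSemidef ∧ ∀ ρ : Matrix (Fin d) (Fin d) ℂ, (S ρ).trace = ρ.trace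

/-- A POVM with `n` outcomes on `ℂ^d`. -/
def IsPOVM {d n : ℕ} (M : Fin n → Matrix (Fin d) (Fin d) ℂ) : Prop :=
  (∀ i, (M i).PosSemidef) ∧ ∑ i, M i = 1

/-- The measurement channel of a family of POVM elements:
`Φ_M(ρ) = ∑ i, Tr(ρ M_i) |i⟩⟨i|`. -/
noncomputable def measChannel {d n : ℕ} (M : Fin n → Matrix (Fin d) (Fin d) ℂ) :
    Matrix (Fin d) (Fin d) ℂ →ₗ[ℂ] Matrix (Fin n) (Fin n) ℂ where
  toFun ρ := ∑ i, (ρ * M i).trace • Matrix.single i i (1 : ℂ)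
  map_add' ρ σ := by
    simp [add_mul, Matrix.trace_add, add_smul, Finset.sum_add_distrib]
  map_smul' c ρ := by
    simp [Matrix.smul_mul, Matrix.trace_smul, smul_smul, Finset.smul_sum]

/-- The symmetric Werner-Holevo channel `Φ₊(ρ) = (Tr(ρ)·1 + ρᵀ)/(d+1)`. -/
noncomputable def whPlus (d : ℕ) :
    Matrix (Fin d) (Fin d) ℂ →ₗ[ℂ] Matrix (Fin d) (Fin d) ℂ where
  toFun ρ := ((d : ℂ) + 1)⁻¹ • (ρ.trace • (1 : Matrix (Fin d) (Fin d) ℂ) + ρ.transpose)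
  map_add' ρ σ := by
    simp [Matrix.trace_add, Matrix.transpose_add, add_smul, smul_add]
    module
  map_smul' c ρ := by
    simp [Matrix.trace_smul, Matrix.transpose_smul, smul_smul, smul_add]
    module

/-- The antisymmetric Werner-Holevo channel `Φ₋(ρ) = (Tr(ρ)·1 − ρᵀ)/(d−1)`. -/
noncomputable def whMinus (d : ℕ) :
    Matrix (Fin d) (Fin d) ℂ →ₗ[ℂ] Matrix (Fin d) (Fin d) ℂ where
  toFun ρ := ((d : ℂ) - 1)⁻¹ • (ρ.trace • (1 : Matrix (Fin d) (Fin d) ℂ) - ρ.transpose)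
  map_add' ρ σ := by
    simp [Matrix.trace_add, Matrix.transpose_add, add_smul]
    module
  map_smul' c ρ := by
    simp [Matrix.trace_smul, Matrix.transpose_smul, smul_smul]
    module

/-- The unitary (conjugation) channel `Φ_U(ρ) = U ρ Uᴴ`. -/
noncomputable def conjChannel {d : ℕ} (U : Matrix (Fin d) (Fin d) ℂ) :
    Matrix (Fin d) (Fin d) ℂ →ₗ[ℂ] Matrix (Fin d) (Fin d) ℂ where
  toFun ρ := U * ρ * Uᴴ
  map_add' ρ σ := by simp [Matrix.mul_add, Matrix.add_mul]
  map_smul' c ρ := by simp [Matrix.mul_smul, Matrix.smul_mul]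


/-- The POVM element `M₀ = [[1/10, 0], [0, 1/5]]`. -/
noncomputable def M16 : Matrix (Fin 2) (Fin 2) ℂ := !![1/10, 0; 0, 1/5]

/-- The POVM element `N₀ = [[3/10, 1/√10], [1/√10, 7/10]]`. -/
noncomputable def N16 : Matrix (Fin 2) (Fin 2) ℂ :=
  !![3/10, (((Real.sqrt 10)⁻¹ : ℝ) : ℂ); (((Real.sqrt 10)⁻¹ : ℝ) : ℂ), 7/10]


/-!
For two-outcome POVMs the Choi operator of `Φ_M − Φ_N` is `diag(-1, 1) ⊗ Pᵀ` with
`P = N₀ − M₀`. Here `P ≥ 0`, so `‖J‖₁ = 2 Tr P`, and sandwiching by `1 ⊗ √σ` gives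
`2 Tr(σ Pᵀ) ≤ 2 Tr P` because `P ≤ (Tr P)·1`. As `det P = 0`, Cayley–Hamilton gives
`P² = (Tr P) P`, so the density matrix `σ = Pᵀ / Tr P` attains the bound. Hence
`‖Φ_M − Φ_N‖_⋄ = 2 Tr P = d ‖Φ_M − Φ_N‖_ME` with `d = 2`.
-/

open scoped MatrixOrder

section
variable {m n : Type*} [Fintype m] [DecidableEq m] [Fintype n] [DecidableEq n]

lemma matSqrt_eq_sqrt {σ : Matrix n n ℂ} (hσ : σ.PosSemidef) : matSqrt σ = CFC.sqrt σ := by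
  rw [CFC.sqrt_eq_real_sqrt σ hσ.nonneg, cfcₙ_eq_cfc, hσ.1.cfc_eq, matSqrt, dif_pos hσ]
  rfl

lemma matAbs_eq_sqrt (A : Matrix n n ℂ) : matAbs A = CFC.sqrt (Aᴴ * A) := by
  have h := posSemidef_conjTranspose_mul_self A
  rw [CFC.sqrt_eq_real_sqrt _ h.nonneg, cfcₙ_eq_cfc, h.1.cfc_eq]
  rfl

lemma matAbs_eq_of_mul_self {A B : Matrix n n ℂ} (hB : B.PosSemidef) (h : B * B = Aᴴ * A) :
    matAbs A = B := by
  rw [matAbs_eq_sqrt, CFC.sqrt_unique h hB.nonneg]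

lemma matAbs_kronecker_of_unitary {U : Matrix m m ℂ} {P : Matrix n n ℂ} (hU : Uᴴ * U = 1)
    (hP : P.PosSemidef) : matAbs (U ⊗ₖ P) = 1 ⊗ₖ P := by
  refine matAbs_eq_of_mul_self (PosSemidef.one.kronecker hP) ?_
  rw [conjTranspose_kronecker, ← mul_kronecker_mul, ← mul_kronecker_mul, hU, one_mul, hP.1.eq]

lemma traceNorm_kronecker_of_unitary {U : Matrix m m ℂ} {P : Matrix n n ℂ} (hU : Uᴴ * U = 1)
    (hP : P.PosSemidef) : traceNorm (U ⊗ₖ P) = Fintype.card m * P.trace.re := by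
  rw [traceNorm, matAbs_kronecker_of_unitary hU hP, trace_kronecker, trace_one]
  simp

lemma Matrix.PosSemidef.trace_mul_nonneg {A B : Matrix n n ℂ} (hA : A.PosSemidef)
    (hB : B.PosSemidef) : 0 ≤ (A * B).trace := by
  have hs : CFC.sqrt B * CFC.sqrt B = B := CFC.sqrt_mul_sqrt_self B hB.nonneg
  have hsH : (CFC.sqrt B)ᴴ = CFC.sqrt B := (CFC.sqrt_nonneg B).isSelfAdjoint
  rw [← hs, ← mul_assoc, trace_mul_cycle]
  simpa [hsH] using (hA.conjTranspose_mul_mul_same (CFC.sqrt B)).trace_nonneg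

lemma Matrix.PosSemidef.posSemidef_trace_smul_one_sub {P : Matrix n n ℂ} (hP : P.PosSemidef) :
    (P.trace • 1 - P).PosSemidef := by
  set c := ∑ i, hP.1.eigenvalues i
  have hc : P.trace = c := by rw [hP.1.trace_eq_sum_eigenvalues]; simp [c]
  have hspec : ∀ x ∈ spectrum ℝ P, x ≤ c := by
    rw [hP.1.spectrum_real_eq_range_eigenvalues]
    rintro _ ⟨i, rfl⟩
    exact Finset.single_le_sum (fun j _ => hP.eigenvalues_nonneg j) (Finset.mem_univ i)
  have h : P.trace • (1 : Matrix n n ℂ) - P = cfc (fun x : ℝ => c - x) P := by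
    rw [cfc_sub _ _ P, cfc_const c P, cfc_id' ℝ P, hc, Algebra.algebraMap_eq_smul_one,
      Complex.coe_smul]
  rw [h, ← nonneg_iff_posSemidef]
  exact cfc_nonneg fun x hx => sub_nonneg.mpr (hspec x hx)

lemma IsDensity.trace_mul_le {σ P : Matrix n n ℂ} (hσ : IsDensity σ) (hP : P.PosSemidef) :
    (σ * P).trace ≤ P.trace := by
  have h := PosSemidef.trace_mul_nonneg hσ.1 hP.posSemidef_trace_smul_one_sub
  rwa [mul_sub, trace_sub, Matrix.mul_smul, mul_one, trace_smul, hσ.2, smul_eq_mul, mul_one,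
    sub_nonneg] at h

end

lemma Matrix.mul_self_eq_trace_smul_sub_det_smul {R : Type*} [CommRing R]
    (A : Matrix (Fin 2) (Fin 2) R) : A * A = A.trace • A - A.det • 1 := by
  ext i j
  fin_cases i <;> fin_cases j <;>
    simp [mul_apply, trace_fin_two, det_fin_two] <;> ring

lemma exists_isDensity_trace_mul_eq_trace {P : Matrix (Fin 2) (Fin 2) ℂ} (hP : P.PosSemidef)
    (hdet : P.det = 0) : ∃ σ, IsDensity σ ∧ (σ * P).trace = P.trace := by
  by_cases htr : P.trace = 0
  · refine ⟨(2 : ℂ)⁻¹ • 1, ⟨PosSemidef.one.smul (by norm_num [Complex.le_def]), ?_⟩, ?_⟩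
    · simp [trace_smul]
    · simp [(hP.trace_eq_zero_iff).mp htr]
  · refine ⟨P.trace⁻¹ • P, ⟨hP.smul ?_, ?_⟩, ?_⟩
    · exact inv_nonneg.mpr hP.trace_nonneg
    · rw [trace_smul, smul_eq_mul, inv_mul_cancel₀ htr]
    · rw [Matrix.smul_mul, mul_self_eq_trace_smul_sub_det_smul, hdet, zero_smul, sub_zero,
        trace_smul, trace_smul, smul_eq_mul, smul_eq_mul, inv_mul_cancel_left₀ htr]

section
variable {d n : ℕ}

lemma measChannel_apply (M : Fin n → Matrix (Fin d) (Fin d) ℂ) (ρ : Matrix (Fin d) (Fin d) ℂ) :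
    measChannel M ρ = diagonal fun i => (ρ * M i).trace := by
  simp only [measChannel, LinearMap.coe_mk, AddHom.coe_mk, smul_single, smul_eq_mul, mul_one,
    sum_single_eq_diagonal]

lemma choi_apply {m : ℕ} (S : Matrix (Fin d) (Fin d) ℂ →ₗ[ℂ] Matrix (Fin m) (Fin m) ℂ)
    (b c : Fin m) (k l : Fin d) : choi S (b, k) (c, l) = S (single k l 1) b c := by
  simp [choi, Matrix.sum_apply, kroneckerMap_apply, single_apply, ite_and]

lemma choi_measChannel_sub (A B : Matrix (Fin d) (Fin d) ℂ) :
    choi (measChannel ![A, 1 - A] - measChannel ![B, 1 - B]) = !![-1, 0; 0, 1] ⊗ₖ (B - A)ᵀ := by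
  ext ⟨b, k⟩ ⟨c, l⟩
  rw [choi_apply, LinearMap.sub_apply, measChannel_apply, measChannel_apply, kroneckerMap_apply]
  fin_cases b <;> fin_cases c <;> simp [trace_single_mul]

end

section
variable {d : ℕ} {A B : Matrix (Fin d) (Fin d) ℂ}

lemma conjTranspose_mul_self_diag_neg_one_one :
    (!![-1, 0; 0, 1] : Matrix (Fin 2) (Fin 2) ℂ)ᴴ * !![-1, 0; 0, 1] = 1 := by
  ext i j
  fin_cases i <;> fin_cases j <;> simp [mul_apply]

lemma traceNorm_sandwich_choi_measChannel_sub (hAB : (B - A).PosSemidef)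
    {σ : Matrix (Fin d) (Fin d) ℂ} (hσ : σ.PosSemidef) :
    traceNorm ((1 ⊗ₖ matSqrt σ) * choi (measChannel ![A, 1 - A] - measChannel ![B, 1 - B]) *
      (1 ⊗ₖ matSqrt σ)) = 2 * (σ * (B - A)ᵀ).trace.re := by
  have hs : matSqrt σ * matSqrt σ = σ := by
    rw [matSqrt_eq_sqrt hσ]; exact CFC.sqrt_mul_sqrt_self σ hσ.nonneg
  have hsH : (matSqrt σ)ᴴ = matSqrt σ := by
    rw [matSqrt_eq_sqrt hσ]; exact (CFC.sqrt_nonneg σ).isSelfAdjoint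
  have hpsd : (matSqrt σ * (B - A)ᵀ * matSqrt σ).PosSemidef := by
    simpa [hsH] using hAB.transpose.conjTranspose_mul_mul_same (matSqrt σ)
  rw [choi_measChannel_sub, ← mul_kronecker_mul, ← mul_kronecker_mul, one_mul, mul_one,
    traceNorm_kronecker_of_unitary conjTranspose_mul_self_diag_neg_one_one hpsd,
    trace_mul_cycle, hs]
  simp

lemma MENorm_measChannel_sub (hAB : (B - A).PosSemidef) :
    MENorm (measChannel ![A, 1 - A] - measChannel ![B, 1 - B]) = 2 * (B - A).trace.re / d := by
  rw [MENorm, choi_measChannel_sub,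
    traceNorm_kronecker_of_unitary conjTranspose_mul_self_diag_neg_one_one hAB.transpose,
    trace_transpose]
  simp

lemma diamondNorm_measChannel_sub (hAB : (B - A).PosSemidef) {σ : Matrix (Fin d) (Fin d) ℂ}
    (hσ : IsDensity σ) (hmax : (σ * (B - A)ᵀ).trace = (B - A).trace) :
    diamondNorm (measChannel ![A, 1 - A] - measChannel ![B, 1 - B]) = 2 * (B - A).trace.re := by
  have hle : ∀ τ : {τ : Matrix (Fin d) (Fin d) ℂ // IsDensity τ},
      traceNorm ((1 ⊗ₖ matSqrt τ.1) * choi (measChannel ![A, 1 - A] - measChannel ![B, 1 - B]) *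
        (1 ⊗ₖ matSqrt τ.1)) ≤ 2 * (B - A).trace.re := by
    rintro ⟨τ, hτ⟩
    rw [traceNorm_sandwich_choi_measChannel_sub hAB hτ.1, ← trace_transpose (B - A)]
    have := (Complex.le_def.mp (hτ.trace_mul_le hAB.transpose)).1
    linarith
  have : Nonempty {τ : Matrix (Fin d) (Fin d) ℂ // IsDensity τ} := ⟨⟨σ, hσ⟩⟩
  refine le_antisymm (ciSup_le hle) (le_ciSup_of_le ⟨_, Set.forall_mem_range.mpr hle⟩ ⟨σ, hσ⟩ ?_)
  rw [traceNorm_sandwich_choi_measChannel_sub hAB hσ.1, hmax]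

end

lemma Complex.ofReal_sqrt_sq {x : ℝ} (hx : 0 ≤ x) : ((√x : ℝ) : ℂ) ^ 2 = x := by
  rw [← Complex.ofReal_pow, Real.sq_sqrt hx]

lemma M16_mul_N16_ne : M16 * N16 ≠ N16 * M16 := by
  intro h
  have h01 := congrFun (congrFun h 0) 1
  norm_num [M16, N16, mul_apply, mul_comm _ (_ : ℂ)⁻¹] at h01

lemma det_M16_sub_N16 : (M16 - N16).det = 0 := by
  norm_num [M16, N16, det_fin_two, ← sq, Complex.ofReal_sqrt_sq]

lemma posSemidef_N16_sub_M16 : (N16 - M16).PosSemidef := by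
  have hv : N16 - M16 = vecMulVec ![((√2 * (√10)⁻¹ : ℝ) : ℂ), ((√2 / 2 : ℝ) : ℂ)]
      (star ![((√2 * (√10)⁻¹ : ℝ) : ℂ), ((√2 / 2 : ℝ) : ℂ)]) := by
    ext i j
    fin_cases i <;> fin_cases j <;>
      simp [M16, N16, vecMulVec_apply] <;> ring_nf <;> simp [Complex.ofReal_sqrt_sq] <;> ring
  rw [hv]
  exact posSemidef_vecMulVec_self_star _

/-- the explicit non-commuting dichotomic POVMs `{M₀, 1−M₀}`,
`{N₀, 1−N₀}` above satisfy `M₀N₀ ≠ N₀M₀`, `det(M₀−N₀) = 0`, and their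
measurement channels form a MEWC pair. -/
theorem stmt16 :
    M16 * N16 ≠ N16 * M16
    ∧ (M16 - N16).det = 0
    ∧ diamondNorm (measChannel ![M16, 1 - M16] - measChannel ![N16, 1 - N16])
        = 2 * MENorm (measChannel ![M16, 1 - M16] - measChannel ![N16, 1 - N16]) := by
  have hP := posSemidef_N16_sub_M16
  have hdet : (N16 - M16)ᵀ.det = 0 := by
    rw [det_transpose, ← neg_sub, det_neg, det_M16_sub_N16, mul_zero]
  obtain ⟨σ, hσ, hmax⟩ := exists_isDensity_trace_mul_eq_trace hP.transpose hdet
  refine ⟨M16_mul_N16_ne, det_M16_sub_N16, ?_⟩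
  rw [diamondNorm_measChannel_sub hP hσ (by rwa [trace_transpose] at hmax),
    MENorm_measChannel_sub hP]
  norm_num

end
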